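/- arXiv:2304.06864 — 2 statements merged into one kernel-verified Lean document; each statement's English description precedes it below -/
import Mathlib

section
/- Two signed graphs Γ and Γ' on the same underlying connected graph G are switching equivalent if and only if they have the same set of negative cycles. -/
/-!
Put `τ = σ σ'`, which is `±1` on edges; `Γ` and `Γ'` have the same negative cycles iff every
cycle has `τ`-product `1`. Then every closed walk has `τ`-product `1`, since a closed walk is
built from cycles and edges traversed back and forth. On a connected graph the `τ`-product
`g v` along a walk from a fixed root to `v` is therefore well defined, and `τ(ab) = g a * g b`:
`Γ'` is `Γ` switched at `{v | g v = -1}`. Conversely, switching at `U` multiplies the sign of a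
walk from `a` to `b` by `ε a * ε b` with `ε = ±1`, which cancels on closed walks.
-/

open scoped Classical
open Polynomial

structure SignedGraph (V : Type*) where
  G : SimpleGraph V
  sgn : V → V → ℤ
  symm : ∀ u v, sgn u v = sgn v u
  pm : ∀ u v, G.Adj u v → sgn u v = 1 ∨ sgn u v = -1
  zero : ∀ u v, ¬ G.Adj u v → sgn u v = 0

namespace SignedGraph

variable {V : Type*}

/-- The (real) adjacency matrix of a signed graph. -/
noncomputable def adjMatrix [Fintype V] (Γ : SignedGraph V) : Matrix V V ℝ :=
  fun u v => (Γ.sgn u v : ℝ)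

/-- Switching with respect to a vertex subset `U`. -/
noncomputable def switch (Γ : SignedGraph V) (U : Set V) : SignedGraph V where
  G := Γ.G
  sgn u v := if ((u ∈ U) ↔ (v ∈ U)) then Γ.sgn u v else -Γ.sgn u v
  symm u v := by
    try dsimp only
    by_cases h : (u ∈ U) ↔ (v ∈ U)
    · rw [if_pos h, if_pos (Iff.symm h), Γ.symm u v]
    · rw [if_neg h, if_neg (fun hh => h (Iff.symm hh)), Γ.symm u v]
  pm u v hadj := by
    by_cases h : (u ∈ U) ↔ (v ∈ U)
    · simpa [h] using Γ.pm u v hadj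
    · rcases Γ.pm u v hadj with h1 | h1 <;> simp [h, h1]
  zero u v hadj := by
    by_cases h : (u ∈ U) ↔ (v ∈ U) <;> simp [h, Γ.zero u v hadj]

/-- The sign function on unordered pairs. -/
def sgnE (Γ : SignedGraph V) : Sym2 V → ℤ := Sym2.lift ⟨Γ.sgn, Γ.symm⟩

/-- The spectrum of `Γ` is symmetric with respect to the origin. -/
def SymmetricSpectrum [Fintype V] [DecidableEq V] (Γ : SignedGraph V) : Prop :=
  ∀ x : ℝ, Γ.adjMatrix.charpoly.rootMultiplicity x =
    Γ.adjMatrix.charpoly.rootMultiplicity (-x)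

end SignedGraph

lemma Int.mul_eq_one_of_eq_neg_one_iff {x y : ℤ} (hx : x * x = 1) (hy : y * y = 1)
    (h : x = -1 ↔ y = -1) : x * y = 1 := by
  rcases mul_self_eq_one_iff.1 hx with rfl | rfl <;>
    rcases mul_self_eq_one_iff.1 hy with rfl | rfl <;> simp_all

namespace SimpleGraph.Walk

variable {V α : Type*} [CommMonoid α] {G : SimpleGraph V} {τ : Sym2 V → α}

lemma prod_edges_cons_eq_one_of_isPath (hτ : ∀ e ∈ G.edgeSet, τ e * τ e = 1)
    (hcycle : ∀ (u : V) (c : G.Walk u u), c.IsCycle → (c.edges.map τ).prod = 1)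
    {a b : V} (h : G.Adj a b) {p : G.Walk b a} (hp : p.IsPath) :
    ((cons h p).edges.map τ).prod = 1 := by
  by_cases he : s(b, a) ∈ p.edges
  · rw [hp.eq_adj_toWalk_of_mem_edges he, edges_cons, Adj.edges_toWalk, Sym2.eq_swap]
    simpa using hτ _ h.symm
  · exact hcycle a _ ((cons_isCycle_iff p h).2 ⟨hp, by rwa [Sym2.eq_swap]⟩)

-- Each loop that `bypass` cuts out is a cycle or an edge traversed back and forth.
lemma prod_edges_bypass (hτ : ∀ e ∈ G.edgeSet, τ e * τ e = 1)
    (hcycle : ∀ (u : V) (c : G.Walk u u), c.IsCycle → (c.edges.map τ).prod = 1)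
    {u v : V} (p : G.Walk u v) : (p.bypass.edges.map τ).prod = (p.edges.map τ).prod := by
  induction p with
  | nil => rfl
  | @cons a b c h p ih =>
    rw [bypass]
    split_ifs with hs
    · have hloop := prod_edges_cons_eq_one_of_isPath hτ hcycle h (p.bypass_isPath.takeUntil hs)
      have hsplit := congrArg (fun q => (q.edges.map τ).prod) (p.bypass.take_spec hs)
      simp only [edges_cons, edges_append, List.map_cons, List.map_append, List.prod_cons,
        List.prod_append] at hloop hsplit ⊢
      rw [← ih, ← hsplit, ← mul_assoc, hloop, one_mul]
    · simp only [edges_cons, List.map_cons, List.prod_cons, ih]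

lemma prod_edges_eq_one_of_isCycle (hτ : ∀ e ∈ G.edgeSet, τ e * τ e = 1)
    (hcycle : ∀ (u : V) (c : G.Walk u u), c.IsCycle → (c.edges.map τ).prod = 1)
    {u : V} (w : G.Walk u u) : (w.edges.map τ).prod = 1 := by
  rw [← prod_edges_bypass hτ hcycle, edges_eq_nil.2 (isPath_iff_nil.1 w.bypass_isPath)]
  rfl

lemma prod_edges_mul_self (hτ : ∀ e ∈ G.edgeSet, τ e * τ e = 1) {u v : V} (p : G.Walk u v) :
    (p.edges.map τ).prod * (p.edges.map τ).prod = 1 := by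
  induction p with
  | nil => simp
  | @cons a b c h p ih =>
    simp only [edges_cons, List.map_cons, List.prod_cons]
    calc _ = (τ s(a, b) * τ s(a, b)) * ((p.edges.map τ).prod * (p.edges.map τ).prod) := by
          ac_rfl
      _ = 1 := by rw [hτ _ h, ih, one_mul]

end SimpleGraph.Walk

namespace SimpleGraph

variable {V α : Type*} [CommMonoid α] {G : SimpleGraph V} {τ : Sym2 V → α}

lemma Connected.exists_potential (hc : G.Connected) (hτ : ∀ e ∈ G.edgeSet, τ e * τ e = 1)
    (hcycle : ∀ (u : V) (c : G.Walk u u), c.IsCycle → (c.edges.map τ).prod = 1) :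
    ∃ g : V → α, (∀ v, g v * g v = 1) ∧ ∀ a b, G.Adj a b → τ s(a, b) = g a * g b := by
  obtain ⟨r⟩ := hc.nonempty
  let path (v : V) : G.Walk r v := (hc.preconnected r v).some
  refine ⟨fun v => ((path v).edges.map τ).prod, fun v => (path v).prod_edges_mul_self hτ,
    fun a b h => ?_⟩
  have hloop := Walk.prod_edges_eq_one_of_isCycle hτ hcycle
    ((path a).append (Walk.cons h (path b).reverse))
  simp only [Walk.edges_append, Walk.edges_cons, Walk.edges_reverse, List.map_append,
    List.map_cons, List.map_reverse, List.prod_append, List.prod_cons, List.prod_reverse] at hloop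
  have ha := (path a).prod_edges_mul_self hτ
  have hb := (path b).prod_edges_mul_self hτ
  calc τ s(a, b) = τ s(a, b) * (((path a).edges.map τ).prod * ((path a).edges.map τ).prod)
          * (((path b).edges.map τ).prod * ((path b).edges.map τ).prod) := by rw [ha, hb]; simp
    _ = (((path a).edges.map τ).prod * (τ s(a, b) * ((path b).edges.map τ).prod))
          * (((path a).edges.map τ).prod * ((path b).edges.map τ).prod) := by ac_rfl
    _ = _ := by rw [hloop, one_mul]

end SimpleGraph

namespace SignedGraph

variable {V : Type*}

lemma ext_of_sgn {Γ Γ' : SignedGraph V} (hG : Γ.G = Γ'.G) (hsgn : Γ.sgn = Γ'.sgn) :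
    Γ = Γ' := by
  cases Γ; cases Γ'; congr

lemma sgn_mul_self_of_adj (Γ : SignedGraph V) {u v : V} (h : Γ.G.Adj u v) :
    Γ.sgn u v * Γ.sgn u v = 1 := by
  rcases Γ.pm u v h with h | h <;> simp [h]

lemma sgnE_mul_self (Γ : SignedGraph V) {e : Sym2 V} (he : e ∈ Γ.G.edgeSet) :
    Γ.sgnE e * Γ.sgnE e = 1 := by
  induction e using Sym2.ind with
  | h u v => exact Γ.sgn_mul_self_of_adj he

noncomputable def switchSign (U : Set V) (v : V) : ℤ := if v ∈ U then -1 else 1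

lemma switchSign_mul_self (U : Set V) (v : V) : switchSign U v * switchSign U v = 1 := by
  unfold switchSign; split_ifs <;> norm_num

lemma switch_sgn (Γ : SignedGraph V) (U : Set V) (u v : V) :
    (Γ.switch U).sgn u v = switchSign U u * switchSign U v * Γ.sgn u v := by
  unfold switch switchSign
  by_cases hu : u ∈ U <;> by_cases hv : v ∈ U <;> simp [hu, hv]

lemma prod_sgnE_switch (Γ : SignedGraph V) (U : Set V) {a b : V} (p : Γ.G.Walk a b) :
    (p.edges.map (Γ.switch U).sgnE).prod
      = switchSign U a * switchSign U b * (p.edges.map Γ.sgnE).prod := by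
  induction p with
  | nil => simp [switchSign_mul_self]
  | @cons a c b h p ih =>
    simp only [SimpleGraph.Walk.edges_cons, List.map_cons, List.prod_cons, ih]
    change (Γ.switch U).sgn a c * _ = _ * (Γ.sgn a c * _)
    rw [switch_sgn]
    linear_combination (switchSign U a * switchSign U b * Γ.sgn a c
      * (p.edges.map Γ.sgnE).prod) * switchSign_mul_self U c

lemma eq_switch_of_sgn_eq_mul {Γ Γ' : SignedGraph V} (hG : Γ'.G = Γ.G) (g : V → ℤ)
    (hg : ∀ v, g v * g v = 1)
    (h : ∀ a b, Γ.G.Adj a b → Γ'.sgn a b = g a * g b * Γ.sgn a b) :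
    Γ' = Γ.switch {v | g v = -1} := by
  have hsign (v : V) : switchSign {v | g v = -1} v = g v := by
    rcases mul_self_eq_one_iff.1 (hg v) with hv | hv <;> simp [switchSign, hv]
  refine ext_of_sgn hG (funext₂ fun a b => ?_)
  rw [switch_sgn, hsign, hsign]
  by_cases hab : Γ.G.Adj a b
  · exact h a b hab
  · rw [Γ.zero a b hab, Γ'.zero a b (hG ▸ hab), mul_zero]

theorem switching_equiv_iff_same_negative_cycles (Γ Γ' : SignedGraph V)
    (hG : Γ'.G = Γ.G) (hc : Γ.G.Connected) :
    (∃ U : Set V, Γ' = Γ.switch U) ↔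
      ∀ (u : V) (w : Γ.G.Walk u u), w.IsCycle →
        ((w.edges.map Γ.sgnE).prod = -1 ↔ (w.edges.map Γ'.sgnE).prod = -1) := by
  constructor
  · rintro ⟨U, rfl⟩ u w -
    rw [prod_sgnE_switch, switchSign_mul_self, one_mul]
  · intro hneg
    have hσ (e : Sym2 V) (he : e ∈ Γ.G.edgeSet) := Γ.sgnE_mul_self he
    have hσ' (e : Sym2 V) (he : e ∈ Γ.G.edgeSet) := Γ'.sgnE_mul_self (hG ▸ he)
    obtain ⟨g, hg, hτ⟩ := hc.exists_potential (τ := fun e => Γ.sgnE e * Γ'.sgnE e)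
      (fun e he => by linear_combination (Γ'.sgnE e * Γ'.sgnE e) * hσ e he + hσ' e he)
      (fun u w hw => by
        rw [List.prod_map_mul]
        exact Int.mul_eq_one_of_eq_neg_one_iff (w.prod_edges_mul_self hσ)
          (w.prod_edges_mul_self hσ') (hneg u w hw))
    refine ⟨_, eq_switch_of_sgn_eq_mul hG g hg fun a b hab => ?_⟩
    have hτab : Γ.sgn a b * Γ'.sgn a b = g a * g b := hτ a b hab
    linear_combination (-Γ'.sgn a b) * Γ.sgn_mul_self_of_adj hab + Γ.sgn a b * hτab

end SignedGraph
end

section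
/- Let Γ = (G, σ) be a signed graph on a bicyclic graph G whose two fundamental cycles C_1, C_2 (with respect to some spanning tree) are odd. If the deleted subgraphs satisfy M(G − V(C_1), x) = M(G − V(C_2), x) and σ(C_1)σ(C_2) = −1, and C_1, C_2 are the only odd cycles among the 2-regular subgraphs contributing to the odd part, then Γ has a symmetric spectrum. -/
/-!
Expand `det (x • 1 + A)` by the Leibniz formula. The permutations moving an odd number of
vertices give the odd part of the characteristic polynomial, and the spectrum is symmetric as soon
as their terms sum to zero. Only permutations `σ` sending every moved vertex to a neighbour
contribute, and such a `σ` factors uniquely as `c * τ`: `c` runs around the cycles of `σ` of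
length at least 3, which span a 2-regular subgraph `D`, and `τ` swaps the ends of the edges of a
matching of `G - V(D)`. If `σ` moves an odd number of vertices then `D` has odd order, so `D` is
`C₁` or `C₂`. An odd cycle has exactly two directions of traversal, both even permutations, so the
permutations attached to `D` contribute `2 σ(D) M(G - V(D), x)`, and the hypotheses make the
contributions of `C₁` and `C₂` cancel.
-/

open scoped Classical
open Polynomial

namespace SignedGraph

variable {V : Type*}

/-- `B` is a (nonempty) 2-regular subgraph of `G`: a disjoint union of cycles. -/
def IsTwoRegular (Γ : SignedGraph V) (B : Γ.G.Subgraph) : Prop :=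
  B.verts.Nonempty ∧ ∀ v ∈ B.verts, (B.neighborSet v).ncard = 2

/-- The product of the signs of all edges of a subgraph. -/
noncomputable def sgnProd (Γ : SignedGraph V) (B : Γ.G.Subgraph) : ℤ :=
  ∏ᶠ e ∈ B.edgeSet, Γ.sgnE e

/-- The number of connected components of a subgraph. -/
noncomputable def ncomp (Γ : SignedGraph V) (B : Γ.G.Subgraph) : ℕ :=
  Nat.card B.coe.ConnectedComponent

/-- The matching polynomial of the subgraph of `G` induced on the vertex set `s`:
`M(H, x) = ∑ᵢ (-1)^i mᵢ(H) x^(|H| - 2i)`, summing over all matchings. -/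
noncomputable def matchingPolyOn [Fintype V] (G : SimpleGraph V) (s : Set V) : Polynomial ℝ :=
  ∑ᶠ t ∈ {t : Finset (Sym2 V) | (↑t : Set (Sym2 V)) ⊆ G.edgeSet ∧
      (∀ e ∈ t, ∀ v ∈ e, v ∈ s) ∧
      (∀ e ∈ t, ∀ f ∈ t, e ≠ f → ∀ v : V, ¬(v ∈ e ∧ v ∈ f))},
    ((-1 : ℝ) ^ t.card) • (Polynomial.X ^ (s.ncard - 2 * t.card) : Polynomial ℝ)

end SignedGraph

open Finset

namespace Equiv.Perm
variable {α : Type*} [Fintype α] [DecidableEq α]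

theorem IsCycle.apply_apply_ne {c : Perm α} (hc : c.IsCycle) (h3 : 3 ≤ #c.support) {x : α}
    (hx : c x ≠ x) : c (c x) ≠ x := fun h => by
  have h2 : c ^ 2 = 1 := hc.pow_eq_one_iff.2 ⟨x, hx, h⟩
  have := Nat.le_of_dvd two_pos (hc.orderOf ▸ orderOf_dvd_of_pow_eq_one h2)
  omega

def movedPairs (τ : Perm α) : Finset (Sym2 α) := τ.support.image fun x => s(x, τ x)

variable {τ : Perm α}

theorem mk_mem_movedPairs_iff (hτ : Function.Involutive τ) {x y : α} :
    s(x, y) ∈ τ.movedPairs ↔ x ≠ y ∧ τ x = y := by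
  simp only [movedPairs, mem_image, mem_support, Sym2.eq_iff]
  constructor
  · rintro ⟨z, hz, ⟨rfl, rfl⟩ | ⟨rfl, rfl⟩⟩
    · exact ⟨Ne.symm hz, rfl⟩
    · exact ⟨hz, hτ z⟩
  · rintro ⟨hxy, rfl⟩
    exact ⟨x, Ne.symm hxy, Or.inl ⟨rfl, rfl⟩⟩

theorem eq_mk_of_mem_movedPairs (hτ : Function.Involutive τ) {e : Sym2 α}
    (he : e ∈ τ.movedPairs) {v : α} (hv : v ∈ e) : e = s(v, τ v) := by
  induction e with | h x y => ?_
  obtain ⟨-, rfl⟩ := (mk_mem_movedPairs_iff hτ).1 he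
  rcases Sym2.mem_iff.1 hv with rfl | rfl
  · rfl
  · rw [hτ, Sym2.eq_swap]

theorem card_support_eq_two_mul_card_movedPairs (hτ : Function.Involutive τ) :
    #τ.support = 2 * #τ.movedPairs := by
  rw [card_eq_sum_card_image (fun x => s(x, τ x)) τ.support, mul_comm, ← smul_eq_mul,
    ← sum_const]
  refine sum_congr rfl fun e he => ?_
  obtain ⟨x, hx, rfl⟩ := mem_image.1 he
  have hfiber : {y ∈ τ.support | s(y, τ y) = s(x, τ x)} = {x, τ x} := by
    ext y
    simp only [mem_filter, mem_support, Sym2.eq_iff, mem_insert, mem_singleton]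
    constructor
    · rintro ⟨-, ⟨rfl, -⟩ | ⟨rfl, -⟩⟩ <;> simp
    · rintro (rfl | rfl)
      · exact ⟨mem_support.1 hx, Or.inl ⟨rfl, rfl⟩⟩
      · exact ⟨by rw [hτ x]; exact Ne.symm (mem_support.1 hx), Or.inr ⟨rfl, hτ x⟩⟩
  rw [hfiber, card_pair (mem_support.1 hx).symm]

theorem sign_eq_neg_one_pow_card_movedPairs (hτ : Function.Involutive τ) :
    sign τ = (-1) ^ #τ.movedPairs := by
  have hcT := cycleType_of_pow_prime_eq_one (σ := τ) (p := 2) (by ext x; simp [sq, hτ x])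
  have hsum := τ.sum_cycleType
  rw [hcT, Multiset.sum_replicate, smul_eq_mul, card_support_eq_two_mul_card_movedPairs hτ] at hsum
  rw [sign_of_cycleType, hcT, Multiset.sum_replicate, Multiset.card_replicate, smul_eq_mul,
    show Multiset.card τ.cycleType = #τ.movedPairs by omega, pow_add, mul_comm, pow_mul]
  simp

theorem eq_of_movedPairs_eq {τ' : Perm α} (hτ : Function.Involutive τ)
    (hτ' : Function.Involutive τ') (h : τ.movedPairs = τ'.movedPairs) : τ = τ' := by
  have key : ∀ x y, x ≠ y → (τ x = y ↔ τ' x = y) := fun x y hxy => by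
    simpa [mk_mem_movedPairs_iff hτ, mk_mem_movedPairs_iff hτ', hxy] using
      congrArg (s(x, y) ∈ ·) h
  ext x
  by_cases hx : τ x = x
  · by_contra hne
    exact hne ((key x _ fun h' => hne (hx.trans h')).2 rfl)
  · exact ((key x _ (Ne.symm hx)).1 rfl).symm

theorem exists_involutive_movedPairs_eq {t : Finset (Sym2 α)} (hdiag : ∀ e ∈ t, ¬e.IsDiag)
    (hdisj : ∀ e ∈ t, ∀ f ∈ t, e ≠ f → ∀ v, ¬(v ∈ e ∧ v ∈ f)) :
    ∃ τ : Perm α, Function.Involutive τ ∧ τ.movedPairs = t := by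
  have huniq : ∀ {v w w'}, s(v, w) ∈ t → s(v, w') ∈ t → w = w' := fun h h' => by
    by_contra hne
    exact hdisj _ h _ h' (fun h'' => hne (Sym2.congr_right.1 h'')) _
      ⟨Sym2.mem_mk_left _ _, Sym2.mem_mk_left _ _⟩
  let f : α → α := fun v => if h : ∃ w, s(v, w) ∈ t then h.choose else v
  have hf : ∀ {v w}, s(v, w) ∈ t → f v = w := fun {v w} h => by
    have hex : ∃ w, s(v, w) ∈ t := ⟨w, h⟩
    simp only [f, dif_pos hex]
    exact huniq hex.choose_spec h
  have hf_fix : ∀ {v}, (¬∃ w, s(v, w) ∈ t) → f v = v := fun h => dif_neg h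
  have hinv : Function.Involutive f := fun v => by
    by_cases h : ∃ w, s(v, w) ∈ t
    · obtain ⟨w, hw⟩ := h
      rw [hf hw, hf (Sym2.eq_swap ▸ hw)]
    · rw [hf_fix h, hf_fix h]
  refine ⟨hinv.toPerm, hinv, ?_⟩
  ext e
  induction e with | h x y => ?_
  rw [mk_mem_movedPairs_iff hinv]
  show x ≠ y ∧ f x = y ↔ _
  constructor
  · rintro ⟨hxy, rfl⟩
    by_cases h : ∃ w, s(x, w) ∈ t
    · obtain ⟨w, hw⟩ := h
      rwa [hf hw]
    · exact absurd (hf_fix h).symm hxy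
  · intro h
    exact ⟨fun hxy => hdiag _ h (hxy ▸ Sym2.mk_isDiag_iff.2 rfl), hf h⟩

end Equiv.Perm

theorem Polynomial.rootMultiplicity_neg_of_comp_neg_X {K : Type*} [Field K] {p : K[X]} {u : K}
    (hu : u ≠ 0) (hp : p.comp (-X) = C u * p) (x : K) :
    p.rootMultiplicity (-x) = p.rootMultiplicity x := by
  rcases eq_or_ne p 0 with rfl | hp0
  · simp
  have h := rootMultiplicity_comp_C_mul_X_add_C p (-1) 0 x isUnit_one.neg
  rw [C_neg, C_1, C_0, add_zero, neg_one_mul, neg_one_mul, add_zero, hp,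
    rootMultiplicity_mul (mul_ne_zero (C_ne_zero.2 hu) hp0), rootMultiplicity_C, zero_add] at h
  exact h.symm

namespace Matrix
variable {n R : Type*} [Fintype n] [DecidableEq n] [CommRing R]

/-- For `A` with zero diagonal, the term of `σ` in the Leibniz expansion of `(-A).charpoly`. -/
noncomputable def permTerm (A : Matrix n n R) (σ : Equiv.Perm n) : R[X] :=
  (Equiv.Perm.sign σ : R[X]) * X ^ (Fintype.card n - #σ.support) *
    C (∏ i ∈ σ.support, A (σ i) i)

theorem charpoly_eq_sum_permTerm (A : Matrix n n R) (hA : ∀ i, A i i = 0) :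
    A.charpoly = ∑ σ : Equiv.Perm n, (-1) ^ #σ.support * A.permTerm σ := by
  rw [charpoly, det_apply']
  refine sum_congr rfl fun σ _ => ?_
  have hfixed : ∀ i ∈ σ.supportᶜ, charmatrix A (σ i) i = X := fun i hi => by
    rw [mem_compl, Equiv.Perm.notMem_support] at hi
    rw [hi, charmatrix_apply_eq, hA, C_0, sub_zero]
  have hmoved : ∀ i ∈ σ.support, charmatrix A (σ i) i = -C (A (σ i) i) := fun i hi =>
    charmatrix_apply_ne _ _ _ (Equiv.Perm.mem_support.1 hi)
  rw [← prod_mul_prod_compl σ.support, prod_congr rfl hmoved, prod_congr rfl hfixed, prod_const,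
    card_compl, prod_neg, ← map_prod, permTerm]
  ring

theorem charpoly_comp_neg_X (A : Matrix n n R) (hA : ∀ i, A i i = 0)
    (hodd : ∑ σ with Odd #σ.support, A.permTerm σ = 0) :
    A.charpoly.comp (-X) = (-1) ^ Fintype.card n * A.charpoly := by
  have hcomp : ∀ σ : Equiv.Perm n, ((-1) ^ #σ.support * A.permTerm σ).comp (-X) =
      (-1) ^ Fintype.card n * A.permTerm σ := fun σ => by
    obtain ⟨m, hm⟩ := Nat.exists_eq_add_of_le (card_le_univ σ.support)
    simp only [permTerm, mul_comp, pow_comp, neg_comp, one_comp, intCast_comp, X_comp, C_comp,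
      neg_pow (X : R[X])]
    rw [hm, Nat.add_sub_cancel_left, pow_add]
    ring
  have heven : ∑ σ, A.permTerm σ = ∑ σ : Equiv.Perm n, (-1) ^ #σ.support * A.permTerm σ := by
    rw [← sub_eq_zero, ← sum_sub_distrib]
    calc ∑ σ, (A.permTerm σ - (-1) ^ #σ.support * A.permTerm σ)
        = ∑ σ, if Odd #σ.support then 2 * A.permTerm σ else 0 := by
          refine sum_congr rfl fun σ _ => ?_
          split_ifs with h
          · rw [h.neg_one_pow]; ring
          · rw [(Nat.not_odd_iff_even.1 h).neg_one_pow]; ring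
      _ = 0 := by rw [← sum_filter, ← mul_sum, hodd, mul_zero]
  rw [charpoly_eq_sum_permTerm A hA, Polynomial.sum_comp, sum_congr rfl fun σ _ => hcomp σ,
    ← mul_sum, heven]

end Matrix

namespace SimpleGraph
variable {V : Type*} {G : SimpleGraph V}

def IsEdgePerm (G : SimpleGraph V) (σ : Equiv.Perm V) : Prop :=
  ∀ x, σ x ≠ x → G.Adj x (σ x)

def IsMatchingInvolutionOn (G : SimpleGraph V) (s : Set V) (τ : Equiv.Perm V) : Prop :=
  Function.Involutive τ ∧ ∀ x, τ x ≠ x → x ∈ s ∧ G.Adj x (τ x)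

namespace IsMatchingInvolutionOn
variable {s : Set V} {τ : Equiv.Perm V}

theorem apply_eq_self (hτ : G.IsMatchingInvolutionOn s τ) {x : V} (hx : x ∉ s) : τ x = x :=
  not_not.1 fun h => hx (hτ.2 x h).1

theorem apply_mem (hτ : G.IsMatchingInvolutionOn s τ) {x : V} (hx : x ∈ s) : τ x ∈ s := by
  by_cases hτx : τ x = x
  · rwa [hτx]
  · exact (hτ.2 (τ x) (by rwa [hτ.1 x, ne_comm])).1

theorem mul_apply_of_notMem (hτ : G.IsMatchingInvolutionOn s τ) (c : Equiv.Perm V) {x : V}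
    (hx : x ∉ s) : (c * τ) x = c x := by
  rw [Equiv.Perm.mul_apply, hτ.apply_eq_self hx]

end IsMatchingInvolutionOn

def longCycleSubgraph (G : SimpleGraph V) (σ : Equiv.Perm V) : G.Subgraph where
  verts := {x | σ (σ x) ≠ x}
  Adj x y := G.Adj x y ∧ σ (σ x) ≠ x ∧ σ (σ y) ≠ y ∧ (σ x = y ∨ σ y = x)
  adj_sub h := h.1
  edge_vert h := h.2.1
  symm := ⟨fun _ _ ⟨h, hx, hy, h'⟩ => ⟨h.symm, hy, hx, h'.symm⟩⟩

theorem apply_mem_longCycleSubgraph_verts_iff {σ : Equiv.Perm V} {x : V} :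
    σ x ∈ (G.longCycleSubgraph σ).verts ↔ x ∈ (G.longCycleSubgraph σ).verts :=
  not_congr σ.injective.eq_iff

namespace Subgraph

/-- `c` runs around every cycle of `D` in one direction. -/
def IsOrientation (D : G.Subgraph) (c : Equiv.Perm V) : Prop :=
  (∀ x, c x ≠ x ↔ x ∈ D.verts) ∧ ∀ x ∈ D.verts, D.Adj x (c x) ∧ c (c x) ≠ x

namespace IsOrientation
variable {D : G.Subgraph} {c c' τ : Equiv.Perm V}

theorem apply_of_notMem (hc : D.IsOrientation c) {x : V} (hx : x ∉ D.verts) : c x = x :=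
  not_not.1 fun h => hx ((hc.1 x).1 h)

theorem inv (hc : D.IsOrientation c) : D.IsOrientation c⁻¹ := by
  have hmoves : ∀ x, c⁻¹ x ≠ x ↔ x ∈ D.verts := fun x => by
    rw [← hc.1 x, Ne, Equiv.Perm.inv_eq_iff_eq, eq_comm]
  refine ⟨hmoves, fun x hx => ⟨?_, fun h => (hc.2 x hx).2 ?_⟩⟩
  · have hmem : c⁻¹ x ∈ D.verts := (hc.1 _).1 (by simpa [eq_comm] using (hmoves x).2 hx)
    simpa using (hc.2 _ hmem).1.symm
  · rw [Equiv.Perm.inv_eq_iff_eq, Equiv.Perm.inv_eq_iff_eq] at h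
    exact h.symm

theorem adj_iff [Finite V] (hD : ∀ v ∈ D.verts, (D.neighborSet v).ncard = 2)
    (hc : D.IsOrientation c) {x : V} (hx : x ∈ D.verts) {y : V} :
    D.Adj x y ↔ y = c x ∨ y = c⁻¹ x := by
  have hne : c x ≠ c⁻¹ x := fun h => (hc.2 x hx).2 (by rw [h]; simp)
  have hnbr : {c x, c⁻¹ x} = D.neighborSet x := by
    refine Set.eq_of_subset_of_ncard_le ?_ (by rw [hD x hx, Set.ncard_pair hne])
      (Set.toFinite _)
    rintro y (rfl | rfl)
    exacts [(hc.2 x hx).1, (hc.inv.2 x hx).1]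
  rw [← D.mem_neighborSet, ← hnbr]
  rfl

theorem eq_of_isCycle_of_apply_eq [Finite V] (hD : ∀ v ∈ D.verts, (D.neighborSet v).ncard = 2)
    (hc : D.IsOrientation c) (hc' : D.IsOrientation c') (hcyc : c.IsCycle) {x : V}
    (hx : x ∈ D.verts) (h : c x = c' x) : c = c' := by
  have step : ∀ y ∈ D.verts, c y = c' y → c (c y) = c' (c y) := fun y hy hcy => by
    have hz : c y ∈ D.verts := (hc.2 y hy).1.snd_mem
    refine (((hc.adj_iff hD hz).1 (hc'.2 _ hz).1).resolve_right fun h' =>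
      (hc'.2 y hy).2 ?_).symm
    rw [← hcy, h']
    simp
  have hpow : ∀ n : ℕ, (c ^ n) x ∈ D.verts ∧ c ((c ^ n) x) = c' ((c ^ n) x) := fun n => by
    induction n with
    | zero => exact ⟨hx, h⟩
    | succ n ih =>
      rw [pow_succ', Equiv.Perm.mul_apply]
      exact ⟨(hc.2 _ ih.1).1.snd_mem, step _ ih.1 ih.2⟩
  ext y
  by_cases hy : y ∈ D.verts
  · obtain ⟨n, -, rfl⟩ := (hcyc.sameCycle ((hc.1 x).2 hx) ((hc.1 y).2 hy)).exists_pow_eq'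
    exact (hpow n).2
  · rw [hc.apply_of_notMem hy, hc'.apply_of_notMem hy]

theorem coe_support [Fintype V] [DecidableEq V] (hc : D.IsOrientation c) :
    (c.support : Set V) = D.verts := by
  ext x
  simp [hc.1 x]

theorem card_support [Fintype V] [DecidableEq V] (hc : D.IsOrientation c) :
    #c.support = D.verts.ncard := by
  rw [← hc.coe_support, Set.ncard_coe_finset]

theorem prod_support_eq_finprod [Fintype V] [DecidableEq V] {M : Type*} [CommMonoid M]
    (hD : ∀ v ∈ D.verts, (D.neighborSet v).ncard = 2) (hc : D.IsOrientation c)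
    (f : Sym2 V → M) : ∏ x ∈ c.support, f s(x, c x) = ∏ᶠ e ∈ D.edgeSet, f e := by
  rw [← finprod_mem_coe_finset]
  refine finprod_mem_eq_of_bijOn (fun x => s(x, c x)) ⟨fun x hx => ?_, fun x hx y hy hxy => ?_,
    fun e he => ?_⟩ fun _ _ => rfl
  · rw [hc.coe_support] at hx
    exact (hc.2 x hx).1
  · rw [hc.coe_support] at hx hy
    rcases Sym2.eq_iff.1 hxy with ⟨h, -⟩ | ⟨h1, h2⟩
    · exact h
    · rw [h1] at h2
      exact absurd h2 (hc.2 y hy).2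
  · induction e with | h u v => ?_
    have hu : u ∈ D.verts := D.edge_vert he
    rw [hc.coe_support]
    rcases (hc.adj_iff hD hu).1 he with rfl | rfl
    · exact ⟨u, hu, rfl⟩
    · exact ⟨c⁻¹ u, (hc.inv.2 u hu).1.snd_mem, by simp [Sym2.eq_swap]⟩

theorem disjoint (hc : D.IsOrientation c) (hτ : G.IsMatchingInvolutionOn D.vertsᶜ τ) :
    c.Disjoint τ := fun x => by
  by_cases hx : x ∈ D.verts
  · exact Or.inr (hτ.apply_eq_self (not_not.2 hx))
  · exact Or.inl (hc.apply_of_notMem hx)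

theorem mul_apply_of_notMem (hc : D.IsOrientation c) (hτ : G.IsMatchingInvolutionOn D.vertsᶜ τ)
    {x : V} (hx : x ∉ D.verts) : (c * τ) x = τ x :=
  hc.apply_of_notMem (hτ.apply_mem (s := D.vertsᶜ) hx)

theorem card_support_mul [Fintype V] [DecidableEq V] (hc : D.IsOrientation c)
    (hτ : G.IsMatchingInvolutionOn D.vertsᶜ τ) :
    #(c * τ).support = D.verts.ncard + #τ.support := by
  rw [(hc.disjoint hτ).support_mul, card_union_of_disjoint (hc.disjoint hτ).disjoint_support,
    hc.card_support]

theorem isEdgePerm_mul (hc : D.IsOrientation c) (hτ : G.IsMatchingInvolutionOn D.vertsᶜ τ) :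
    G.IsEdgePerm (c * τ) := fun x hx => by
  by_cases hxD : x ∈ D.verts
  · rw [hτ.mul_apply_of_notMem c (not_not.2 hxD)]
    exact D.adj_sub (hc.2 x hxD).1
  · rw [hc.mul_apply_of_notMem hτ hxD] at hx ⊢
    exact (hτ.2 x hx).2

theorem longCycleSubgraph_mul [Finite V] (hD : ∀ v ∈ D.verts, (D.neighborSet v).ncard = 2)
    (hc : D.IsOrientation c) (hτ : G.IsMatchingInvolutionOn D.vertsᶜ τ) :
    G.longCycleSubgraph (c * τ) = D := by
  have happly : ∀ {x}, x ∈ D.verts → (c * τ) x = c x := fun hx =>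
    hτ.mul_apply_of_notMem c (not_not.2 hx)
  have hverts : ∀ x, (c * τ) ((c * τ) x) ≠ x ↔ x ∈ D.verts := fun x => by
    by_cases hx : x ∈ D.verts
    · rw [happly hx, happly (hc.2 x hx).1.snd_mem]
      exact iff_of_true (hc.2 x hx).2 hx
    · rw [hc.mul_apply_of_notMem hτ hx,
        hc.mul_apply_of_notMem hτ (hτ.apply_mem (s := D.vertsᶜ) hx), hτ.1 x]
      exact iff_of_false (not_not.2 rfl) hx
  ext x y
  · exact hverts x
  · simp only [longCycleSubgraph, hverts]
    constructor
    · rintro ⟨-, hx, hy, h | h⟩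
      · rw [happly hx] at h
        exact h ▸ (hc.2 x hx).1
      · rw [happly hy] at h
        exact h ▸ (hc.2 y hy).1.symm
    · intro h
      have hx := D.edge_vert h
      have hy := D.edge_vert h.symm
      refine ⟨D.adj_sub h, hx, hy, ?_⟩
      rw [happly hx, happly hy]
      rcases (hc.adj_iff hD hx).1 h with rfl | rfl
      · exact Or.inl rfl
      · exact Or.inr (by simp)

end IsOrientation

theorem exists_isCycle_spanningCoe_walk [Finite V] {D : G.Subgraph}
    (hD : ∀ v ∈ D.verts, (D.neighborSet v).ncard = 2) (hconn : D.coe.Connected) :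
    ∃ (v : V) (p : D.spanningCoe.Walk v v), p.IsCycle ∧ ∀ x, x ∈ p.support ↔ x ∈ D.verts := by
  obtain ⟨⟨v, hv⟩⟩ := hconn.nonempty
  have hcyc : D.spanningCoe.IsCycles := fun w ⟨u, hu⟩ => hD w (D.edge_vert hu)
  have hv2 : (D.spanningCoe.neighborSet v).ncard = 2 := hD v hv
  obtain ⟨p, hp, hverts⟩ := hcyc.exists_cycle_toSubgraph_verts_eq_connectedComponentSupp
    (c := D.spanningCoe.connectedComponentMk v) rfl (Set.nonempty_of_ncard_ne_zero (by omega))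
  refine ⟨v, p, hp, fun x => ⟨fun hx => ?_, fun hx => ?_⟩⟩
  · obtain ⟨y, hy⟩ := Set.nonempty_of_ncard_ne_zero
      (by rw [hp.ncard_neighborSet_toSubgraph_eq_two hx]; simp)
    exact D.edge_vert (p.toSubgraph.adj_sub hy)
  · rw [← p.mem_verts_toSubgraph, hverts, ConnectedComponent.mem_supp_iff,
      ConnectedComponent.eq]
    let f : D.coe →g D.spanningCoe := ⟨Subtype.val, id⟩
    exact (hconn.preconnected ⟨x, hx⟩ ⟨v, hv⟩).map f

theorem exists_isOrientation_isCycle [Fintype V] [DecidableEq V] {D : G.Subgraph}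
    (hD : ∀ v ∈ D.verts, (D.neighborSet v).ncard = 2) (hconn : D.coe.Connected) :
    ∃ c, D.IsOrientation c ∧ c.IsCycle := by
  obtain ⟨v, p, hp, hsupp⟩ := exists_isCycle_spanningCoe_walk hD hconn
  set l := p.support.tail
  have hl : l.Nodup := hp.support_nodup
  have hlen : l.length = p.length := by simp [l, Walk.length_support]
  have h3 : 3 ≤ p.length := hp.three_le_length
  have hmem : ∀ x, x ∈ l ↔ x ∈ D.verts := fun x => by
    rw [← hsupp, p.mem_support_iff, or_iff_right_of_imp]
    rintro rfl
    exact Walk.end_mem_tail_support hp.not_nil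
  have hsupport : l.formPerm.support = l.toFinset :=
    List.support_formPerm_of_nodup l hl fun y h => by simp [h] at hlen; omega
  have hmoves : ∀ x, l.formPerm x ≠ x ↔ x ∈ D.verts := fun x => by
    rw [← Equiv.Perm.mem_support, hsupport, List.mem_toFinset, hmem]
  have hcyc : l.formPerm.IsCycle := List.isCycle_formPerm hl (by omega)
  have hcard : 3 ≤ #l.formPerm.support := by
    rw [hsupport, List.toFinset_card_of_nodup hl]
    omega
  refine ⟨l.formPerm, ⟨hmoves, fun x hx => ⟨?_, hcyc.apply_apply_ne hcard ((hmoves x).2 hx)⟩⟩,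
    hcyc⟩
  obtain ⟨i, hi, rfl⟩ := List.getElem_of_mem ((hmem x).2 hx)
  have hget : ∀ j (hj : j < l.length), l[j] = p.getVert (j + 1) := fun j hj => by
    rw [p.getVert_eq_support_getElem (by omega), List.getElem_tail]
  have hwrap : p.getVert ((i + 1) % l.length) = p.getVert (i + 1) := by
    rcases Nat.lt_or_ge (i + 1) l.length with h | h
    · rw [Nat.mod_eq_of_lt h]
    · rw [show i + 1 = l.length by omega, Nat.mod_self, Walk.getVert_zero, hlen,
        Walk.getVert_length]
  rw [List.formPerm_apply_getElem l hl i hi, hget, hget, ← hwrap]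
  exact p.adj_getVert_succ (hlen ▸ Nat.mod_lt _ (by omega))

theorem isOrientation_iff_of_isCycle [Finite V] {D : G.Subgraph}
    (hD : ∀ v ∈ D.verts, (D.neighborSet v).ncard = 2) {c₀ : Equiv.Perm V}
    (hc₀ : D.IsOrientation c₀) (hcyc : c₀.IsCycle) {c : Equiv.Perm V} :
    D.IsOrientation c ↔ c = c₀ ∨ c = c₀⁻¹ := by
  refine ⟨fun hc => ?_, by rintro (rfl | rfl); exacts [hc₀, hc₀.inv]⟩
  obtain ⟨x, hx, -⟩ := id hcyc
  rw [hc₀.1] at hx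
  rcases (hc₀.adj_iff hD hx).1 (hc.2 x hx).1 with h | h
  · exact Or.inl (hc₀.eq_of_isCycle_of_apply_eq hD hc hcyc hx h.symm).symm
  · exact Or.inr (hc₀.inv.eq_of_isCycle_of_apply_eq hD hc hcyc.inv hx h.symm).symm

section Connected
variable [Fintype V] [DecidableEq V] {D : G.Subgraph}

theorem IsOrientation.isCycle (hD : ∀ v ∈ D.verts, (D.neighborSet v).ncard = 2)
    (hconn : D.coe.Connected) {c : Equiv.Perm V} (hc : D.IsOrientation c) : c.IsCycle := by
  obtain ⟨c₀, hc₀, hcyc⟩ := exists_isOrientation_isCycle hD hconn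
  rcases (isOrientation_iff_of_isCycle hD hc₀ hcyc).1 hc with rfl | rfl
  exacts [hcyc, hcyc.inv]

theorem card_isOrientation (hD : ∀ v ∈ D.verts, (D.neighborSet v).ncard = 2)
    (hconn : D.coe.Connected) : #{c : Equiv.Perm V | D.IsOrientation c} = 2 := by
  obtain ⟨c₀, hc₀, hcyc⟩ := exists_isOrientation_isCycle hD hconn
  obtain ⟨x, hx, -⟩ := id hcyc
  have hne : c₀ ≠ c₀⁻¹ := fun h => (hc₀.2 x ((hc₀.1 x).1 hx)).2 (by nth_rw 2 [h]; simp)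
  rw [← card_pair hne]
  congr 1
  ext c
  simp [isOrientation_iff_of_isCycle hD hc₀ hcyc]

end Connected

end Subgraph

namespace IsEdgePerm
variable {σ : Equiv.Perm V}

theorem longCycleSubgraph_adj_iff (hσ : G.IsEdgePerm σ) {x : V}
    (hx : x ∈ (G.longCycleSubgraph σ).verts) {y : V} :
    (G.longCycleSubgraph σ).Adj x y ↔ y = σ x ∨ y = σ⁻¹ x := by
  have hmoved : σ x ≠ x := fun h => hx (by rw [h, h])
  constructor
  · rintro ⟨-, -, -, rfl | rfl⟩
    exacts [Or.inl rfl, Or.inr (by simp)]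
  · rintro (rfl | rfl)
    · exact ⟨hσ x hmoved, hx, apply_mem_longCycleSubgraph_verts_iff.2 hx, Or.inl rfl⟩
    · have hy : σ⁻¹ x ∈ (G.longCycleSubgraph σ).verts :=
        apply_mem_longCycleSubgraph_verts_iff.1 (by simpa using hx)
      have hne : σ⁻¹ x ≠ x := fun h => hmoved (Equiv.Perm.inv_eq_iff_eq.1 h).symm
      have hadj := hσ (σ⁻¹ x) (by simpa using hne.symm)
      exact ⟨by simpa using hadj.symm, hx, hy, Or.inr (by simp)⟩

theorem ncard_neighborSet_longCycleSubgraph (hσ : G.IsEdgePerm σ) :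
    ∀ v ∈ (G.longCycleSubgraph σ).verts, ((G.longCycleSubgraph σ).neighborSet v).ncard = 2 := by
  intro v hv
  have hnbr : (G.longCycleSubgraph σ).neighborSet v = {σ v, σ⁻¹ v} := by
    ext w
    exact hσ.longCycleSubgraph_adj_iff hv
  rw [hnbr, Set.ncard_pair]
  intro h
  apply hv
  rw [h]
  simp

theorem exists_isOrientation_mul_eq (hσ : G.IsEdgePerm σ) :
    ∃ c τ, (G.longCycleSubgraph σ).IsOrientation c ∧
      G.IsMatchingInvolutionOn (G.longCycleSubgraph σ).vertsᶜ τ ∧ σ = c * τ := by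
  set L := (G.longCycleSubgraph σ).verts
  have hL : ∀ {x}, σ x ∈ L ↔ x ∈ L := apply_mem_longCycleSubgraph_verts_iff
  let c := Equiv.Perm.ofSubtype (p := (· ∈ L)) (σ.subtypePerm fun _ => hL)
  have hc_mem : ∀ x ∈ L, c x = σ x := fun x hx => Equiv.Perm.ofSubtype_apply_of_mem _ hx
  have hc_notMem : ∀ x ∉ L, c x = x := fun x hx => Equiv.Perm.ofSubtype_apply_of_not_mem _ hx
  have hτ_mem : ∀ x ∈ L, (c⁻¹ * σ) x = x := fun x hx => by
    rw [Equiv.Perm.mul_apply, Equiv.Perm.inv_eq_iff_eq, hc_mem x hx]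
  have hτ_notMem : ∀ x ∉ L, (c⁻¹ * σ) x = σ x := fun x hx => by
    rw [Equiv.Perm.mul_apply, Equiv.Perm.inv_eq_iff_eq, hc_notMem _ (mt hL.1 hx)]
  refine ⟨c, c⁻¹ * σ, ⟨fun x => ?_, fun x hx => ?_⟩, ⟨fun x => ?_, fun x hx => ?_⟩, by simp⟩
  · by_cases hx : x ∈ L
    · exact iff_of_true (by rw [hc_mem x hx]; exact fun h => hx (by rw [h, h])) hx
    · exact iff_of_false (not_not.2 (hc_notMem x hx)) hx
  · rw [hc_mem x hx, hc_mem _ (hL.2 hx)]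
    exact ⟨(hσ.longCycleSubgraph_adj_iff hx).2 (Or.inl rfl), hx⟩
  · by_cases hx : x ∈ L
    · rw [hτ_mem x hx, hτ_mem x hx]
    · rw [hτ_notMem x hx, hτ_notMem _ (mt hL.1 hx)]
      exact not_not.1 hx
  · have hxL : x ∉ L := fun h => hx (hτ_mem x h)
    rw [hτ_notMem x hxL] at hx ⊢
    exact ⟨hxL, hσ x hx⟩

end IsEdgePerm

namespace Subgraph
variable {D : G.Subgraph}

theorem IsOrientation.eq_and_eq_of_mul_eq {c τ c' τ' : Equiv.Perm V} (hc : D.IsOrientation c)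
    (hτ : G.IsMatchingInvolutionOn D.vertsᶜ τ) (hc' : D.IsOrientation c')
    (hτ' : G.IsMatchingInvolutionOn D.vertsᶜ τ') (h : c * τ = c' * τ') : c = c' ∧ τ = τ' := by
  have hcc : c = c' := by
    ext x
    by_cases hx : x ∈ D.verts
    · rw [← hτ.mul_apply_of_notMem c (not_not.2 hx), h,
        hτ'.mul_apply_of_notMem c' (not_not.2 hx)]
    · rw [hc.apply_of_notMem hx, hc'.apply_of_notMem hx]
  subst hcc
  exact ⟨rfl, mul_left_cancel h⟩

theorem filter_longCycleSubgraph_eq_image [Fintype V] [DecidableEq V]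
    (hD : ∀ v ∈ D.verts, (D.neighborSet v).ncard = 2) (hodd : Odd D.verts.ncard) :
    ({σ ∈ {σ | Odd #σ.support ∧ G.IsEdgePerm σ} | G.longCycleSubgraph σ = D} :
      Finset (Equiv.Perm V)) =
      (({c | D.IsOrientation c} : Finset (Equiv.Perm V)) ×ˢ
        ({τ | G.IsMatchingInvolutionOn D.vertsᶜ τ} : Finset (Equiv.Perm V))).image
        fun p => p.1 * p.2 := by
  ext σ
  simp only [mem_filter, mem_univ, true_and, mem_image, mem_product, Prod.exists]
  constructor
  · rintro ⟨⟨-, hσ⟩, rfl⟩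
    obtain ⟨c, τ, hc, hτ, rfl⟩ := hσ.exists_isOrientation_mul_eq
    exact ⟨c, τ, ⟨hc, hτ⟩, rfl⟩
  · rintro ⟨c, τ, ⟨hc, hτ⟩, rfl⟩
    refine ⟨⟨?_, hc.isEdgePerm_mul hτ⟩, hc.longCycleSubgraph_mul hD hτ⟩
    rw [hc.card_support_mul hτ, Equiv.Perm.card_support_eq_two_mul_card_movedPairs hτ.1]
    exact hodd.add_even (even_two_mul _)

end Subgraph

end SimpleGraph

namespace SignedGraph
variable {V : Type*}

theorem adjMatrix_apply_self [Fintype V] (Γ : SignedGraph V) (v : V) : Γ.adjMatrix v v = 0 := by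
  simp [adjMatrix, Γ.zero v v (Γ.G.loopless.irrefl v)]

section
variable [Fintype V] [DecidableEq V]

theorem symmetricSpectrum_of_sum_odd_permTerm_eq_zero (Γ : SignedGraph V)
    (h : ∑ σ with Odd #σ.support, Γ.adjMatrix.permTerm σ = 0) : Γ.SymmetricSpectrum := fun x =>
  (rootMultiplicity_neg_of_comp_neg_X (pow_ne_zero (Fintype.card V) (neg_ne_zero.2 one_ne_zero))
    (by rw [Matrix.charpoly_comp_neg_X _ Γ.adjMatrix_apply_self h]; simp) x).symm

open Equiv.Perm in
theorem sum_isMatchingInvolutionOn_eq_matchingPolyOn (G : SimpleGraph V) (s : Set V) :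
    ∑ τ with G.IsMatchingInvolutionOn s τ, (sign τ : ℝ[X]) * X ^ (s.ncard - #τ.support) =
      matchingPolyOn G s := by
  rw [matchingPolyOn, finsum_mem_eq_finite_toFinset_sum _ (Set.toFinite _)]
  refine sum_nbij movedPairs (fun τ hτ => ?_) (fun τ hτ τ' hτ' h => ?_) (fun t ht => ?_)
    (fun τ hτ => ?_)
  · obtain ⟨hinv, hmoved⟩ := (mem_filter.1 hτ).2
    rw [Set.Finite.mem_toFinset]
    refine ⟨fun e he => ?_, fun e he v hv => ?_, fun e he f hf hef v hv => ?_⟩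
    · obtain ⟨x, hx, rfl⟩ := mem_image.1 he
      exact (hmoved x (mem_support.1 hx)).2
    · rw [eq_mk_of_mem_movedPairs hinv he hv] at he
      exact (hmoved v ((mk_mem_movedPairs_iff hinv).1 he).1.symm).1
    · exact hef ((eq_mk_of_mem_movedPairs hinv he hv.1).trans
        (eq_mk_of_mem_movedPairs hinv hf hv.2).symm)
  · exact eq_of_movedPairs_eq (mem_filter.1 hτ).2.1 (mem_filter.1 hτ').2.1 h
  · obtain ⟨hedges, hverts, hdisj⟩ := (Set.Finite.mem_toFinset _).1 ht
    obtain ⟨τ, hinv, rfl⟩ := exists_involutive_movedPairs_eq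
      (fun e he => G.not_isDiag_of_mem_edgeSet (hedges he)) hdisj
    refine ⟨τ, mem_filter.2 ⟨mem_univ _, hinv, fun x hx => ?_⟩, rfl⟩
    have he : s(x, τ x) ∈ τ.movedPairs := (mk_mem_movedPairs_iff hinv).2 ⟨Ne.symm hx, rfl⟩
    exact ⟨hverts _ he x (Sym2.mem_mk_left _ _), hedges he⟩
  · have hinv := (mem_filter.1 hτ).2.1
    rw [card_support_eq_two_mul_card_movedPairs hinv, sign_eq_neg_one_pow_card_movedPairs hinv,
      Polynomial.smul_eq_C_mul]
    simp

theorem prod_adjMatrix_of_isOrientation (Γ : SignedGraph V) {D : Γ.G.Subgraph}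
    (hD : ∀ v ∈ D.verts, (D.neighborSet v).ncard = 2) {c : Equiv.Perm V}
    (hc : D.IsOrientation c) : ∏ i ∈ c.support, Γ.adjMatrix (c i) i = Γ.sgnProd D := by
  have hsgn : ∀ i, Γ.adjMatrix (c i) i = ((Γ.sgnE s(i, c i) : ℤ) : ℝ) := fun i => by
    simp [adjMatrix, sgnE, Γ.symm]
  rw [prod_congr rfl fun i _ => hsgn i, ← Int.cast_prod, hc.prod_support_eq_finprod hD, sgnProd]

theorem prod_adjMatrix_of_isMatchingInvolutionOn (Γ : SignedGraph V) {s : Set V}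
    {τ : Equiv.Perm V} (hτ : Γ.G.IsMatchingInvolutionOn s τ) :
    ∏ i ∈ τ.support, Γ.adjMatrix (τ i) i = 1 := by
  refine prod_involution (fun i _ => τ i) (fun i hi => ?_)
    (fun i hi _ => Equiv.Perm.mem_support.1 hi) (fun i hi => Equiv.Perm.apply_mem_support.2 hi)
    (fun i _ => hτ.1 i)
  rw [hτ.1 i, adjMatrix, adjMatrix, Γ.symm (τ i)]
  rcases Γ.pm i (τ i) (hτ.2 i (Equiv.Perm.mem_support.1 hi)).2 with h | h <;> simp [h]

theorem permTerm_eq_zero_of_not_isEdgePerm (Γ : SignedGraph V) {σ : Equiv.Perm V}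
    (hσ : ¬Γ.G.IsEdgePerm σ) : Γ.adjMatrix.permTerm σ = 0 := by
  obtain ⟨x, hx, hadj⟩ := not_forall₂.1 hσ
  have hzero : Γ.adjMatrix (σ x) x = 0 := by
    simp [adjMatrix, Γ.zero _ _ fun h => hadj h.symm]
  rw [Matrix.permTerm, prod_eq_zero (f := fun i => Γ.adjMatrix (σ i) i)
    (Equiv.Perm.mem_support.2 hx) hzero, C_0, mul_zero]

theorem permTerm_mul (Γ : SignedGraph V) {D : Γ.G.Subgraph}
    (hD : ∀ v ∈ D.verts, (D.neighborSet v).ncard = 2) (hconn : D.coe.Connected)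
    (hodd : Odd D.verts.ncard) {c τ : Equiv.Perm V} (hc : D.IsOrientation c)
    (hτ : Γ.G.IsMatchingInvolutionOn D.vertsᶜ τ) :
    Γ.adjMatrix.permTerm (c * τ) =
      C (Γ.sgnProd D : ℝ) * ((Equiv.Perm.sign τ : ℝ[X]) * X ^ (D.vertsᶜ.ncard - #τ.support)) := by
  have hdisj := hc.disjoint hτ
  have hsign : Equiv.Perm.sign c = 1 := by
    rw [(hc.isCycle hD hconn).sign, hc.card_support, hodd.neg_one_pow, neg_neg]
  have hprod_c : ∏ i ∈ c.support, Γ.adjMatrix ((c * τ) i) i = Γ.sgnProd D := by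
    rw [← Γ.prod_adjMatrix_of_isOrientation hD hc]
    refine prod_congr rfl fun i hi => ?_
    rw [hτ.mul_apply_of_notMem c (not_not.2 ((hc.1 i).1 (Equiv.Perm.mem_support.1 hi)))]
  have hprod_τ : ∏ i ∈ τ.support, Γ.adjMatrix ((c * τ) i) i = 1 := by
    rw [← Γ.prod_adjMatrix_of_isMatchingInvolutionOn hτ]
    refine prod_congr rfl fun i hi => ?_
    rw [hc.mul_apply_of_notMem hτ (hτ.2 i (Equiv.Perm.mem_support.1 hi)).1]
  have hcard : Fintype.card V - #(c * τ).support = D.vertsᶜ.ncard - #τ.support := by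
    have := Set.ncard_add_ncard_compl D.verts
    rw [Nat.card_eq_fintype_card] at this
    rw [hc.card_support_mul hτ]
    omega
  rw [Matrix.permTerm, Equiv.Perm.sign_mul, hsign, one_mul, hcard, hdisj.support_mul,
    prod_union hdisj.disjoint_support, hprod_c, hprod_τ, mul_one]
  ring

theorem sum_permTerm_fiber_longCycleSubgraph (Γ : SignedGraph V) {D : Γ.G.Subgraph}
    (hD : ∀ v ∈ D.verts, (D.neighborSet v).ncard = 2) (hconn : D.coe.Connected)
    (hodd : Odd D.verts.ncard) :
    ∑ σ ∈ {σ | Odd #σ.support ∧ Γ.G.IsEdgePerm σ} with Γ.G.longCycleSubgraph σ = D,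
      Γ.adjMatrix.permTerm σ = 2 * (C (Γ.sgnProd D : ℝ) * matchingPolyOn Γ.G D.vertsᶜ) := by
  set O : Finset (Equiv.Perm V) := {c | D.IsOrientation c}
  set I : Finset (Equiv.Perm V) := {τ | Γ.G.IsMatchingInvolutionOn D.vertsᶜ τ}
  have hinj : Set.InjOn (fun p : Equiv.Perm V × Equiv.Perm V => p.1 * p.2) ↑(O ×ˢ I) := by
    rintro ⟨c, τ⟩ hp ⟨c', τ'⟩ hp' heq
    simp only [O, I, coe_product, Set.mem_prod, coe_filter, mem_univ, true_and,
      Set.mem_ofPred_eq] at hp hp'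
    exact Prod.ext_iff.2 (hp.1.eq_and_eq_of_mul_eq hp.2 hp'.1 hp'.2 heq)
  have hinner : ∀ c ∈ O, ∑ τ ∈ I, Γ.adjMatrix.permTerm (c * τ) =
      C (Γ.sgnProd D : ℝ) * matchingPolyOn Γ.G D.vertsᶜ := fun c hc => by
    rw [← sum_isMatchingInvolutionOn_eq_matchingPolyOn, mul_sum]
    exact sum_congr rfl fun τ hτ =>
      Γ.permTerm_mul hD hconn hodd (mem_filter.1 hc).2 (mem_filter.1 hτ).2
  rw [SimpleGraph.Subgraph.filter_longCycleSubgraph_eq_image hD hodd, sum_image hinj,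
    sum_product, sum_congr rfl hinner, sum_const,
    SimpleGraph.Subgraph.card_isOrientation hD hconn, two_smul, two_mul]

theorem sum_odd_permTerm_eq (Γ : SignedGraph V) (𝒟 : Finset Γ.G.Subgraph)
    (h𝒟 : ∀ D, D ∈ 𝒟 ↔ Γ.IsTwoRegular D ∧ Odd D.verts.ncard)
    (hconn : ∀ D ∈ 𝒟, D.coe.Connected) :
    ∑ σ with Odd #σ.support, Γ.adjMatrix.permTerm σ =
      2 * ∑ D ∈ 𝒟, C (Γ.sgnProd D : ℝ) * matchingPolyOn Γ.G D.vertsᶜ := by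
  have hmaps : ∀ σ ∈ ({σ | Odd #σ.support ∧ Γ.G.IsEdgePerm σ} : Finset (Equiv.Perm V)),
      Γ.G.longCycleSubgraph σ ∈ 𝒟 := fun σ hσ => by
    obtain ⟨hodd, hσ⟩ := (mem_filter.1 hσ).2
    obtain ⟨c, τ, hc, hτ, rfl⟩ := hσ.exists_isOrientation_mul_eq
    rw [hc.card_support_mul hτ, Equiv.Perm.card_support_eq_two_mul_card_movedPairs hτ.1,
      Nat.odd_add, iff_true_intro (even_two_mul _), iff_true] at hodd
    exact (h𝒟 _).2 ⟨⟨Set.nonempty_of_ncard_ne_zero hodd.pos.ne',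
      hσ.ncard_neighborSet_longCycleSubgraph⟩, hodd⟩
  rw [← sum_filter_of_ne fun σ _ h => not_not.1 (mt Γ.permTerm_eq_zero_of_not_isEdgePerm h),
    filter_filter, ← sum_fiberwise_of_maps_to hmaps, mul_sum]
  refine sum_congr rfl fun D hD => ?_
  obtain ⟨⟨-, hreg⟩, hodd⟩ := (h𝒟 D).1 hD
  exact Γ.sum_permTerm_fiber_longCycleSubgraph hreg (hconn D hD) hodd

end

theorem bicyclic_two_odd_cycles_symmetricSpectrum_general [Fintype V] [DecidableEq V]
    (Γ : SignedGraph V)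
    (C1 C2 : Γ.G.Subgraph) (h12 : C1 ≠ C2)
    (hc1 : C1.coe.Connected) (hc2 : C2.coe.Connected)
    (hodd : {B : Γ.G.Subgraph | Γ.IsTwoRegular B ∧ Odd B.verts.ncard} = {C1, C2})
    (hM : matchingPolyOn Γ.G C1.vertsᶜ = matchingPolyOn Γ.G C2.vertsᶜ)
    (hsgn : Γ.sgnProd C1 * Γ.sgnProd C2 = -1) :
    Γ.SymmetricSpectrum := by
  have h𝒟 : ∀ D, D ∈ ({C1, C2} : Finset Γ.G.Subgraph) ↔ Γ.IsTwoRegular D ∧ Odd D.verts.ncard :=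
    fun D => by simpa using (Set.ext_iff.1 hodd D).symm
  have hcancel : Γ.sgnProd C1 + Γ.sgnProd C2 = 0 := by
    rcases Int.eq_one_or_neg_one_of_mul_eq_neg_one' hsgn with ⟨h1, h2⟩ | ⟨h1, h2⟩ <;>
      simp [h1, h2]
  apply symmetricSpectrum_of_sum_odd_permTerm_eq_zero
  rw [Γ.sum_odd_permTerm_eq {C1, C2} h𝒟 (by simp [hc1, hc2]), sum_pair h12, hM, ← add_mul,
    ← C_add, ← Int.cast_add, hcancel]
  simp

theorem bicyclic_two_odd_cycles_symmetricSpectrum [Fintype V] [DecidableEq V]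
    (Γ : SignedGraph V) (hconn : Γ.G.Connected)
    (hE : Γ.G.edgeSet.ncard = Fintype.card V + 1)
    (C1 C2 : Γ.G.Subgraph) (h12 : C1 ≠ C2)
    (hc1 : C1.coe.Connected) (hc2 : C2.coe.Connected)
    (hodd : {B : Γ.G.Subgraph | Γ.IsTwoRegular B ∧ Odd B.verts.ncard} = {C1, C2})
    (hM : matchingPolyOn Γ.G C1.vertsᶜ = matchingPolyOn Γ.G C2.vertsᶜ)
    (hsgn : Γ.sgnProd C1 * Γ.sgnProd C2 = -1) :
    Γ.SymmetricSpectrum :=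
  bicyclic_two_odd_cycles_symmetricSpectrum_general Γ C1 C2 h12 hc1 hc2 hodd hM hsgn

end SignedGraph
end
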